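/- arXiv:1310.5869 — 3 statements merged into one kernel-verified Lean document; each statement's English description precedes it below -/
import Mathlib

section
/- For any integers j ≥ 1 and k ≥ 1, the integer j divides the sum ∑_{d ∣ j} μ(d) · k^{j/d}, where μ is the Möbius function. -/
/-!
It suffices to show that `p ^ (a + 1) ∣ ∑_{d ∣ n} μ(d) x^(n/d)` whenever `p ^ (a + 1) ∣ n`.
Only squarefree `d` contribute, and these pair up as `d` and `p * d` with `p ∤ d`, so the sum
becomes `∑_{d ∣ n, p ∤ d} μ(d) (x^(n/d) - x^(n/(p d)))`. For such `d`, `n / d = p ^ (a + 1) * t`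
and `n / (p d) = p ^ a * t`, and Fermat's little theorem
`y^p ≡ y [ZMOD p]`, lifted along `p`-th powers, gives `y^(p^(a+1)) ≡ y^(p^a) [ZMOD p^(a+1)]`.
-/

open ArithmeticFunction ArithmeticFunction.Moebius Finset

theorem Int.prime_pow_dvd_pow_sub_pow_div {p a m : ℕ} (hp : p.Prime) (hm : p ^ (a + 1) ∣ m)
    (x : ℤ) : (p : ℤ) ^ (a + 1) ∣ x ^ m - x ^ (m / p) := by
  obtain ⟨t, rfl⟩ := hm
  have hdiv : p ^ (a + 1) * t / p = p ^ a * t := by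
    rw [pow_succ', mul_assoc, Nat.mul_div_cancel_left _ hp.pos]
  have hlift := dvd_sub_pow_of_dvd_sub (prime_dvd_pow_self_sub hp (x ^ t)) a
  rwa [← pow_mul, ← pow_succ', ← pow_mul', ← pow_mul', ← hdiv] at hlift

theorem ArithmeticFunction.moebius_prime_mul_of_not_dvd {p d : ℕ} (hp : p.Prime) (hpd : ¬p ∣ d) : μ (p * d) = -μ d := by
  rw [isMultiplicative_moebius.map_mul_of_coprime (hp.coprime_iff_not_dvd.mpr hpd),
    moebius_apply_prime hp, neg_one_mul]

theorem ArithmeticFunction.moebius_prime_mul_of_dvd {p d : ℕ} (hp : p.Prime) (hpd : p ∣ d) : μ (p * d) = 0 :=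
  moebius_eq_zero_of_not_squarefree fun h =>
    hp.not_isUnit (h p (mul_dvd_mul_left p hpd))

theorem Nat.sum_divisors_moebius_smul_eq_sum_not_dvd {M : Type*} [AddCommGroup M] {p n : ℕ}
    (hp : p.Prime) (hpn : p ∣ n) (g : ℕ → M) :
    ∑ d ∈ n.divisors, μ d • g d = ∑ d ∈ n.divisors with ¬p ∣ d, μ d • (g d - g (p * d)) := by
  have hmaps : Set.MapsTo (p * ·) (n.divisors.filter (¬p ∣ ·)) (n.divisors.filter (p ∣ ·)) := by
    intro d hd
    simp only [coe_filter, Nat.mem_divisors] at hd ⊢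
    exact ⟨⟨(hp.coprime_iff_not_dvd.mpr hd.2).mul_dvd_of_dvd_of_dvd hpn hd.1.1, hd.1.2⟩,
      dvd_mul_right p d⟩
  have hmultiples : ∑ d ∈ n.divisors with p ∣ d, μ d • g d
      = -∑ d ∈ n.divisors with ¬p ∣ d, μ d • g (p * d) := by
    rw [← sum_neg_distrib]
    refine (sum_of_injOn (p * ·) (fun _ _ _ _ h => Nat.eq_of_mul_eq_mul_left hp.pos h)
      hmaps ?_ ?_).symm
    · intro d hd hd_image
      simp only [mem_filter, Nat.mem_divisors] at hd
      obtain ⟨e, rfl⟩ := hd.2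
      have hpe : p ∣ e := by
        by_contra hpe
        exact hd_image ⟨e, by simp [hpe, (dvd_mul_left e p).trans hd.1.1, hd.1.2], rfl⟩
      rw [moebius_prime_mul_of_dvd hp hpe, zero_smul]
    · intro d hd
      rw [moebius_prime_mul_of_not_dvd hp (mem_filter.mp hd).2, neg_smul]
  rw [← sum_filter_not_add_sum_filter n.divisors (p ∣ ·), hmultiples, ← sub_eq_add_neg,
    ← sum_sub_distrib]
  simp only [smul_sub]

theorem Int.prime_pow_dvd_sum_divisors_moebius_mul_pow {p a n : ℕ} (hp : p.Prime)
    (hpn : p ^ (a + 1) ∣ n) (x : ℤ) :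
    (p : ℤ) ^ (a + 1) ∣ ∑ d ∈ n.divisors, μ d * x ^ (n / d) := by
  have hsum := Nat.sum_divisors_moebius_smul_eq_sum_not_dvd hp
    ((dvd_pow_self p a.succ_ne_zero).trans hpn) (fun d => x ^ (n / d))
  simp only [smul_eq_mul] at hsum
  rw [hsum]
  refine dvd_sum fun d hd => Dvd.dvd.mul_left ?_ _
  obtain ⟨⟨hdn, -⟩, hpd⟩ := by simpa only [mem_filter, Nat.mem_divisors] using hd
  have hpow : p ^ (a + 1) ∣ n / d := Nat.dvd_div_of_mul_dvd <| by
    rw [mul_comm]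
    exact ((hp.coprime_iff_not_dvd.mpr hpd).pow_left _).mul_dvd_of_dvd_of_dvd hpn hdn
  rw [mul_comm, ← Nat.div_div_eq_div_mul]
  exact prime_pow_dvd_pow_sub_pow_div hp hpow x

open ArithmeticFunction ArithmeticFunction.Moebius in
theorem necklace_integrality_general (j k : ℕ) :
    (j : ℤ) ∣ ∑ d ∈ j.divisors, (μ d : ℤ) * (k : ℤ) ^ (j / d) := by
  rw [Int.natCast_dvd, Nat.dvd_iff_prime_pow_dvd_dvd]
  rintro p (_ | a) hp hpa
  · simp
  · rw [← Int.natCast_dvd]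
    exact_mod_cast Int.prime_pow_dvd_sum_divisors_moebius_mul_pow hp hpa k

open ArithmeticFunction ArithmeticFunction.Moebius in
/-- Integrality of the necklace polynomial: `j` divides `∑_{d ∣ j} μ(d) k^(j/d)`. -/
theorem necklace_integrality (j k : ℕ) (hj : 1 ≤ j) (hk : 1 ≤ k) :
    (j : ℤ) ∣ ∑ d ∈ j.divisors, (μ d : ℤ) * (k : ℤ) ^ (j / d) :=
  necklace_integrality_general j k
end

section
/- Let G be a group with nilpotency class at most 3, let p > 3 be a prime and m ≥ 1, and suppose that every element of the commutator subgroup [G,G] has order dividing p^m. Then the map x ↦ x^{p^{2m}} is a group homomorphism on G. -/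
/-!
Write `c = ⁅y⁻¹, x⁻¹⁆`, so that `y * x = x * y * c`, and let `u`, `v` be the commutators of `c⁻¹`
with `x⁻¹` and `y⁻¹`. In class at most 3 these are central, and collecting
`(x * y) ^ n` gives the Hall–Petrescu formula
`(x * y) ^ n = x ^ n * y ^ n * c ^ C(n, 2) * u ^ C(n, 3) * v ^ (C(n, 2) + 2 C(n, 3))`.
Since `k! * C(n, k)` is a multiple of `n`, an exponent `e` of `[G, G]` that divides `n` and is
coprime to `6` divides `C(n, 2)` and `C(n, 3)`, so all the correction terms vanish. For
`e = p ^ m` with `p > 3` and `n = p ^ (2 m)` this is the theorem.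
-/

section Collection

variable {G : Type*} [Group G]

theorem pow_mul_pow_of_mul_eq_mul_mul {a b z : G} (hz : ∀ g, Commute z g)
    (h : b * a = a * b * z) (k l : ℕ) : b ^ k * a ^ l = a ^ l * b ^ k * z ^ (k * l) := by
  have hk : SemiconjBy a (b ^ k * z ^ k) (b ^ k) := by
    rw [← (hz b).symm.mul_pow]
    exact SemiconjBy.pow_right ((mul_assoc a b z).symm.trans h.symm) k
  have hkl : SemiconjBy (b ^ k) a (a * z ^ k) := by
    rw [SemiconjBy, ← hk.eq, mul_assoc, ((hz _).pow_left k).eq]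
  rw [(hkl.pow_right l).eq, ((hz a).pow_left k).symm.mul_pow, ← pow_mul,
    ((hz _).pow_left _).right_comm]

variable {x y c u v : G}

theorem pow_mul_eq_of_relations (hv : ∀ g, Commute v g) (hyx : y * x = x * y * c)
    (hcy : c * y = y * c * v) (n : ℕ) :
    y ^ n * x = x * y ^ n * c ^ n * v ^ n.choose 2 := by
  induction n with
  | zero => simp
  | succ n ih =>
    have hcyn : c * y ^ n = y ^ n * c * v ^ n := by
      simpa using pow_mul_pow_of_mul_eq_mul_mul hv hcy 1 n
    calc y ^ (n + 1) * x = y * x * y ^ n * c ^ n * v ^ n.choose 2 := by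
          rw [pow_succ', mul_assoc, ih]; group
      _ = x * y * (c * y ^ n) * c ^ n * v ^ n.choose 2 := by rw [hyx]; group
      _ = x * y ^ (n + 1) * c ^ (n + 1) * v ^ (n + 1).choose 2 := by
          rw [hcyn, Nat.choose_succ_succ', Nat.choose_one_right]
          simp only [mul_assoc, ((hv c).pow_pow n n).left_comm]
          group

theorem pow_mul_pow_mul_pow_mul_mul_of_relations (hu : ∀ g, Commute u g)
    (hv : ∀ g, Commute v g) (hyx : y * x = x * y * c) (hcx : c * x = x * c * u)
    (hcy : c * y = y * c * v) (n a : ℕ) :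
    x ^ n * y ^ n * c ^ a * (x * y) =
      x ^ (n + 1) * y ^ (n + 1) * c ^ (a + n) * (u ^ a * v ^ (n.choose 2 + a + n)) := by
  have hcax : c ^ a * x = x * c ^ a * u ^ a := by
    simpa using pow_mul_pow_of_mul_eq_mul_mul hu hcx a 1
  have hcay : c ^ (a + n) * y = y * c ^ (a + n) * v ^ (a + n) := by
    simpa using pow_mul_pow_of_mul_eq_mul_mul hv hcy (a + n) 1
  calc x ^ n * y ^ n * c ^ a * (x * y) = x ^ n * (y ^ n * x) * c ^ a * y * u ^ a := by
        rw [mul_assoc _ (c ^ a), ← mul_assoc (c ^ a), hcax]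
        simp only [mul_assoc, ((hu y).pow_left a).eq]
    _ = x ^ (n + 1) * y ^ n * (c ^ (a + n) * y) * (u ^ a * v ^ n.choose 2) := by
        rw [pow_mul_eq_of_relations hv hyx hcy]
        simp only [mul_assoc, ((hv (c ^ a)).pow_left _).left_comm, ((hv y).pow_left _).left_comm,
          ((hv (u ^ a)).pow_left _).eq]
        group
    _ = _ := by
        rw [hcay]
        simp only [mul_assoc, ((hv (u ^ a)).pow_left (a + n)).left_comm]
        group

theorem mul_pow_eq_of_relations (hu : ∀ g, Commute u g) (hv : ∀ g, Commute v g)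
    (hyx : y * x = x * y * c) (hcx : c * x = x * c * u) (hcy : c * y = y * c * v) (n : ℕ) :
    (x * y) ^ n = x ^ n * y ^ n * c ^ n.choose 2 *
      (u ^ n.choose 3 * v ^ (n.choose 2 + 2 * n.choose 3)) := by
  induction n with
  | zero => simp
  | succ n ih =>
    have htail : Commute (u ^ n.choose 3 * v ^ (n.choose 2 + 2 * n.choose 3)) (x * y) :=
      ((hu _).pow_left _).mul_left ((hv _).pow_left _)
    rw [pow_succ, ih, htail.right_comm, pow_mul_pow_mul_pow_mul_mul_of_relations hu hv hyx hcx hcy,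
      mul_assoc, ((hv _).pow_left _).mul_mul_mul_comm, ← pow_add, ← pow_add,
      Nat.choose_succ_succ' n 1, Nat.choose_succ_succ' n 2, Nat.choose_one_right]
    ring_nf

end Collection

theorem Nat.dvd_choose_of_dvd_of_coprime_factorial {e n k : ℕ} (hk : k ≠ 0) (hn : e ∣ n)
    (he : e.Coprime k.factorial) : e ∣ n.choose k := by
  refine he.dvd_of_dvd_mul_left ?_
  rw [← Nat.descFactorial_eq_factorial_mul_choose]
  obtain ⟨j, rfl⟩ := Nat.exists_eq_succ_of_ne_zero hk
  rcases n with _ | n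
  · simp
  · rw [Nat.succ_descFactorial_succ]
    exact dvd_mul_of_dvd_left hn _

open scoped commutatorElement

section ClassThree

variable {G : Type*} [Group G]

theorem mul_eq_mul_mul_commutatorElement_inv_inv (a b : G) : b * a = a * b * ⁅b⁻¹, a⁻¹⁆ := by
  rw [commutatorElement_def]; group

theorem commutatorElement_mem_commutator (a b : G) : ⁅a, b⁆ ∈ commutator G :=
  Subgroup.commutator_mem_commutator (Subgroup.mem_top a) (Subgroup.mem_top b)

theorem commute_commutatorElement_of_lowerCentralSeries_three_eq_bot
    (hclass : (⊤ : Subgroup G).lowerCentralSeries 3 = ⊥) {a : G} (ha : a ∈ commutator G)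
    (g h : G) : Commute ⁅a, g⁆ h := by
  have hag : ⁅a, g⁆ ∈ (⊤ : Subgroup G).lowerCentralSeries 2 :=
    Subgroup.commutator_mem_commutator (Subgroup.top_lowerCentralSeries_one (G := G) ▸ ha)
      (Subgroup.mem_top g)
  have hagh := Subgroup.commutator_mem_commutator hag (Subgroup.mem_top h)
  rw [← Subgroup.lowerCentralSeries_succ, hclass, Subgroup.mem_bot] at hagh
  exact commutatorElement_eq_one_iff_commute.mp hagh

theorem mul_pow_of_lowerCentralSeries_three_eq_bot
    (hclass : (⊤ : Subgroup G).lowerCentralSeries 3 = ⊥) {e n : ℕ}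
    (hcomm : ∀ c ∈ commutator G, c ^ e = 1) (he : e.Coprime 6) (hn : e ∣ n) (x y : G) :
    (x * y) ^ n = x ^ n * y ^ n := by
  have hcentral := commute_commutatorElement_of_lowerCentralSeries_three_eq_bot hclass
    (inv_mem (commutatorElement_mem_commutator y⁻¹ x⁻¹))
  have hvanish : ∀ a b : G, ∀ k, e ∣ k → ⁅a, b⁆ ^ k = 1 := fun a b k hk =>
    orderOf_dvd_iff_pow_eq_one.mp
      ((orderOf_dvd_of_pow_eq_one (hcomm _ (commutatorElement_mem_commutator a b))).trans hk)
  have h2 : e ∣ n.choose 2 := Nat.dvd_choose_of_dvd_of_coprime_factorial two_ne_zero hn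
    (he.coprime_dvd_right (by decide))
  have h3 : e ∣ n.choose 3 := Nat.dvd_choose_of_dvd_of_coprime_factorial three_ne_zero hn he
  rw [mul_pow_eq_of_relations (hcentral x⁻¹) (hcentral y⁻¹)
    (mul_eq_mul_mul_commutatorElement_inv_inv x y) (mul_eq_mul_mul_commutatorElement_inv_inv x _)
    (mul_eq_mul_mul_commutatorElement_inv_inv y _), hvanish _ _ _ h2, hvanish _ _ _ h3,
    hvanish _ _ _ (h2.add (h3.mul_left 2))]
  simp

end ClassThree

theorem pow_hom_of_class_three_general (G : Type*) [Group G]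
    (hclass : (⊤ : Subgroup G).lowerCentralSeries 3 = ⊥)
    (p : ℕ) (hp : p.Prime) (hp3 : 3 < p) (m : ℕ)
    (hcomm : ∀ c ∈ commutator G, c ^ (p ^ m) = 1) :
    ∀ x y : G, (x * y) ^ (p ^ (2 * m)) = x ^ (p ^ (2 * m)) * y ^ (p ^ (2 * m)) := by
  have hp6 : p.Coprime 6 := Nat.Coprime.mul_right
    ((Nat.coprime_primes hp Nat.prime_two).2 (by omega))
    ((Nat.coprime_primes hp Nat.prime_three).2 (by omega))
  exact mul_pow_of_lowerCentralSeries_three_eq_bot hclass hcomm (hp6.pow_left m)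
    (pow_dvd_pow p (by omega))

/-- If `G` has nilpotency class at most 3, `p > 3` is a prime, `m ≥ 1`, and every element of
the commutator subgroup has order dividing `p^m`, then `x ↦ x^(p^(2m))` is a homomorphism. -/
theorem pow_hom_of_class_three (G : Type*) [Group G]
    (hclass : (⊤ : Subgroup G).lowerCentralSeries 3 = ⊥)
    (p : ℕ) (hp : p.Prime) (hp3 : 3 < p) (m : ℕ) (hm : 1 ≤ m)
    (hcomm : ∀ c ∈ commutator G, c ^ (p ^ m) = 1) :
    ∀ x y : G, (x * y) ^ (p ^ (2 * m)) = x ^ (p ^ (2 * m)) * y ^ (p ^ (2 * m)) :=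
  pow_hom_of_class_three_general G hclass p hp hp3 m hcomm
end

section
/- Let p be a prime and j an integer with 2 ≤ j ≤ p − 1. Then in the distributive-law expansion Ω(p^m-th degree map) ≃ p^m + ∑_j n_j (Ωω_j)∘H_j, the coefficient n_j, which is an integer multiple of the Witt number (1/j)∑_{d∣j} μ(d)(p^m)^{j/d}, is divisible by p^m. Formally: every integer multiple of (1/j)∑_{d∣j} μ(d)(p^m)^{j/d} is divisible by p^m when 2 ≤ j < p. -/
/-! Every summand `μ(d) (p^m)^(j/d)` has exponent `j/d ≥ 1`, so `p^m` divides `j W`;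
since `0 < j < p`, the factor `j` is a unit modulo `p^m`. -/

theorem dvd_sum_divisors_mul_pow_div {R : Type*} [CommSemiring R] (x : R) (f : ℕ → R) (n : ℕ) :
    x ∣ ∑ d ∈ n.divisors, f d * x ^ (n / d) :=
  Finset.dvd_sum fun _ hd =>
    (dvd_pow_self x (Nat.div_pos (Nat.divisor_le hd) (Nat.pos_of_mem_divisors hd)).ne').mul_left _

theorem Nat.Prime.isCoprime_pow_natCast_of_pos_of_lt {p j : ℕ} (hp : p.Prime) (m : ℕ)
    (hj0 : 0 < j) (hjp : j < p) : IsCoprime ((p : ℤ) ^ m) (j : ℤ) :=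
  (Nat.isCoprime_iff_coprime.mpr
    (hp.coprime_iff_not_dvd.mpr (Nat.not_dvd_of_pos_of_lt hj0 hjp))).pow_left

open ArithmeticFunction ArithmeticFunction.Moebius in
theorem multiple_of_witt_divisible_general (p : ℕ) (hp : p.Prime) (m : ℕ)
    (j : ℕ) (hj2 : 2 ≤ j) (hjp : j < p) :
    ∀ W c : ℤ, (j : ℤ) * W = ∑ d ∈ j.divisors, (μ d : ℤ) * ((p : ℤ) ^ m) ^ (j / d) →
      ((p : ℤ) ^ m) ∣ c * W := by
  intro W c hW
  have hjW : (p : ℤ) ^ m ∣ j * W := hW ▸ dvd_sum_divisors_mul_pow_div _ _ j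
  have hcop := hp.isCoprime_pow_natCast_of_pos_of_lt m (by omega) hjp
  exact (hcop.dvd_of_dvd_mul_left hjW).mul_left c

open ArithmeticFunction ArithmeticFunction.Moebius in
/-- Every integer multiple of the Witt number `(1/j) ∑_{d∣j} μ(d) (p^m)^(j/d)` is divisible
by `p^m` when `2 ≤ j < p` for a prime `p` and `m ≥ 1`. -/
theorem multiple_of_witt_divisible (p : ℕ) (hp : p.Prime) (m : ℕ) (hm : 1 ≤ m)
    (j : ℕ) (hj2 : 2 ≤ j) (hjp : j < p) :
    ∀ W c : ℤ, (j : ℤ) * W = ∑ d ∈ j.divisors, (μ d : ℤ) * ((p : ℤ) ^ m) ^ (j / d) →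
      ((p : ℤ) ^ m) ∣ c * W :=
  multiple_of_witt_divisible_general p hp m j hj2 hjp
end
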